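/- arXiv:1803.08472 — 3 statements merged into one kernel-verified Lean document; each statement's English description precedes it below -/
import Mathlib

section
/- Let {0} ≠ U ⊆ V be a nonzero subspace of V spanned by a subset of Φ, and set Φ_U := Φ ∩ U, a sub-root system of Φ. Let π_U : V → U denote the orthogonal projection of V onto U. Then there exists some κ with 1 ≤ κ < 2 such that π_U(𝒫_Φ) ⊆ κ·𝒫_{Φ_U}, where 𝒫_Φ := ConvexHull(Φ) and 𝒫_{Φ_U} := ConvexHull(Φ_U) are the root polytopes. -/
open RealInnerProductSpace Pointwise

/-- The covector `α^∨ := 2α/⟨α,α⟩` of a vector `α`. -/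
noncomputable def corootOf {V : Type*} [NormedAddCommGroup V] [InnerProductSpace ℝ V]
    (α : V) : V := (2 / ⟪α, α⟫) • α

/-- The reflection `s_α(u) := u - ⟨u,α^∨⟩α`. -/
noncomputable def rsReflect {V : Type*} [NormedAddCommGroup V] [InnerProductSpace ℝ V]
    (α u : V) : V := u - ⟪u, corootOf α⟫ • α

/-- An irreducible crystallographic reduced root system in a Euclidean space `V`,
together with a chosen base `α_1, …, α_n` of simple roots. -/
structure RootSystemData (V : Type*) [NormedAddCommGroup V] [InnerProductSpace ℝ V]
    (n : ℕ) where
  Φ : Set V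
  finite : Φ.Finite
  nonzero : ∀ α ∈ Φ, α ≠ 0
  spans : Submodule.span ℝ Φ = ⊤
  reflect_mem : ∀ α ∈ Φ, ∀ β ∈ Φ, rsReflect α β ∈ Φ
  reduced : ∀ α ∈ Φ, (Submodule.span ℝ {α} : Set V) ∩ Φ = {α, -α}
  crystal : ∀ α ∈ Φ, ∀ β ∈ Φ, ∃ z : ℤ, ⟪β, corootOf α⟫ = (z : ℝ)
  irred : ¬∃ Φ₁ Φ₂ : Set V, Φ₁.Nonempty ∧ Φ₂.Nonempty ∧ Φ₁ ∪ Φ₂ = Φ ∧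
    Disjoint Φ₁ Φ₂ ∧ ∀ α ∈ Φ₁, ∀ β ∈ Φ₂, ⟪α, β⟫ = 0
  simple : Fin n → V
  simple_mem : ∀ i, simple i ∈ Φ
  simple_indep : LinearIndependent ℝ simple
  simple_span : Submodule.span ℝ (Set.range simple) = ⊤
  root_combo : ∀ α ∈ Φ, (∃ c : Fin n → ℕ, α = ∑ i, (c i : ℝ) • simple i) ∨
    (∃ c : Fin n → ℕ, α = -∑ i, (c i : ℝ) • simple i)

namespace RootSystemData

variable {V : Type*} [NormedAddCommGroup V] [InnerProductSpace ℝ V] {n : ℕ}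

/-- The set `Φ^+` of positive roots. -/
def Pos (R : RootSystemData V n) : Set V :=
  {α | α ∈ R.Φ ∧ ∃ c : Fin n → ℕ, α = ∑ i, (c i : ℝ) • R.simple i}

/-- The Weyl group `W`, as the subgroup of linear automorphisms of `V` generated by
the reflections `s_α`, `α ∈ Φ`. -/
def weyl (R : RootSystemData V n) : Subgroup (V ≃ₗ[ℝ] V) :=
  Subgroup.closure {w | ∃ α ∈ R.Φ, ∀ u, w u = rsReflect α u}

/-- The Weyl group orbit `W(l)`. -/
def orbit (R : RootSystemData V n) (l : V) : Set V := {v | ∃ w ∈ R.weyl, v = w l}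

/-- The permutohedron `Π(l) := ConvexHull W(l)`. -/
noncomputable def perm (R : RootSystemData V n) (l : V) : Set V := convexHull ℝ (R.orbit l)

/-- The root lattice `Q := Span_ℤ(Φ)`. -/
def rootLattice (R : RootSystemData V n) : AddSubgroup V := AddSubgroup.closure R.Φ

/-- The coset `Q + l`. -/
def latticeCoset (R : RootSystemData V n) (l : V) : Set V := {v | v - l ∈ R.rootLattice}

/-- The discrete permutohedron `Π^Q(l) := Π(l) ∩ (Q + l)`. -/
noncomputable def permQ (R : RootSystemData V n) (l : V) : Set V :=
  R.perm l ∩ R.latticeCoset l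

/-- The weight lattice `P`. -/
def weights (R : RootSystemData V n) : Set V :=
  {v | ∀ α ∈ R.Φ, ∃ z : ℤ, ⟪v, corootOf α⟫ = (z : ℝ)}

/-- A vector is dominant if it pairs nonnegatively with all simple coroots. -/
def IsDomVec (R : RootSystemData V n) (v : V) : Prop :=
  ∀ i, 0 ≤ ⟪v, corootOf (R.simple i)⟫

/-- Dominant weights, i.e. elements of `P_{≥0}`. -/
def IsDominant (R : RootSystemData V n) (l : V) : Prop :=
  l ∈ R.weights ∧ R.IsDomVec l

/-- Root order: `μ ≤ l` iff `l − μ` is a nonnegative integer combination of simple roots. -/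
def rootOrderLE (R : RootSystemData V n) (μ l : V) : Prop :=
  ∃ c : Fin n → ℕ, l - μ = ∑ i, (c i : ℝ) • R.simple i

/-- Membership in `ℕ[Φ]^W`: `W`-invariance of `k : Φ → ℕ`. -/
def IsWInvariant (R : RootSystemData V n) (k : V → ℕ) : Prop :=
  ∀ w ∈ R.weyl, ∀ α ∈ R.Φ, k (w α) = k α

/-- Short roots: minimizers of the squared length. -/
def IsShort (R : RootSystemData V n) (α : V) : Prop :=
  α ∈ R.Φ ∧ ∀ β ∈ R.Φ, ⟪α, α⟫ ≤ ⟪β, β⟫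

/-- Long roots: maximizers of the squared length. -/
def IsLong (R : RootSystemData V n) (α : V) : Prop :=
  α ∈ R.Φ ∧ ∀ β ∈ R.Φ, ⟪β, β⟫ ≤ ⟪α, α⟫

/-- Simply laced: all roots have the same length. -/
def IsSimplyLaced (R : RootSystemData V n) : Prop :=
  ∀ α ∈ R.Φ, ∀ β ∈ R.Φ, ⟪α, α⟫ = ⟪β, β⟫

/-- `k ∈ ℕ[Φ]^W` is good if `Φ` is simply laced, or else `k` vanishing on short roots
implies it vanishes on long roots. -/
def IsGood (R : RootSystemData V n) (k : V → ℕ) : Prop :=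
  R.IsSimplyLaced ∨ ((∀ α, R.IsShort α → k α = 0) → ∀ α, R.IsLong α → k α = 0)

/-- The symmetric interval-firing relation: `l → l + α` whenever
`⟨l + α/2, α^∨⟩ ∈ {−k(α), …, k(α)}`. -/
def symFire (R : RootSystemData V n) (k : V → ℕ) (l m : V) : Prop :=
  ∃ α ∈ R.Pos, m = l + α ∧ ∃ z : ℤ,
    ⟪l + (2⁻¹ : ℝ) • α, corootOf α⟫ = (z : ℝ) ∧ -(k α : ℤ) ≤ z ∧ z ≤ (k α : ℤ)

/-- `ν` is the stabilization of `μ` for the symmetric interval-firing process. -/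
def symStab (R : RootSystemData V n) (k : V → ℕ) (μ ν : V) : Prop :=
  Relation.ReflTransGen (R.symFire k) μ ν ∧ ∀ ξ, ¬ R.symFire k ν ξ

/-- The length of a Weyl group element: its number of inversions. -/
noncomputable def len (R : RootSystemData V n) (w : V ≃ₗ[ℝ] V) : ℕ :=
  {α | α ∈ R.Pos ∧ w α ∉ R.Pos}.ncard

/-- `w` is the minimal length element of `W` such that `w⁻¹(l)` is dominant
(i.e. `w = w_l`). -/
def IsMinDomRep (R : RootSystemData V n) (l : V) (w : V ≃ₗ[ℝ] V) : Prop :=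
  w ∈ R.weyl ∧ R.IsDomVec (w⁻¹ l) ∧
    ∀ w' ∈ R.weyl, R.IsDomVec (w'⁻¹ l) → R.len w ≤ R.len w'

/-- The fiber `(s^sym_𝐤)⁻¹(l)`: the set of weights whose symmetric interval-firing
stabilization is `η_𝐤(l) = l + w_l(ρ_𝐤)`.  Here `ρk` is the vector `ρ_𝐤`. -/
def symFiber (R : RootSystemData V n) (k : V → ℕ) (ρk : V) (l : V) : Set V :=
  {μ | μ ∈ R.weights ∧ ∃ w, R.IsMinDomRep l w ∧ R.symStab k μ (l + w ρk)}

/-- The symmetric Ehrhart-like count `L^sym_l(𝐤)`. -/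
noncomputable def symL (R : RootSystemData V n) (k : V → ℕ) (ρk : V) (l : V) : ℕ :=
  (R.symFiber k ρk l).ncard

/-- `I^{0,1}_l := {i : ⟨l, α_i^∨⟩ ∈ {0,1}}`. -/
def I01 (R : RootSystemData V n) (l : V) : Set (Fin n) :=
  {i | ⟪l, corootOf (R.simple i)⟫ = 0 ∨ ⟪l, corootOf (R.simple i)⟫ = 1}

/-- The parabolic subgroup `W_I`. -/
def parabolic (R : RootSystemData V n) (I : Set (Fin n)) : Subgroup (V ≃ₗ[ℝ] V) :=
  Subgroup.closure {w | ∃ i ∈ I, ∀ u, w u = rsReflect (R.simple i) u}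

/-- The parabolic sub-root system `Φ_I := Φ ∩ Span_ℝ{α_i : i ∈ I}`. -/
def parabolicRoots (R : RootSystemData V n) (I : Set (Fin n)) : Set V :=
  R.Φ ∩ (Submodule.span ℝ (R.simple '' I) : Set V)

/-- The set `W^I` of minimal length representatives of the cosets of `W_I` in `W`. -/
noncomputable def minReps (R : RootSystemData V n) (I : Set (Fin n)) : Set (V ≃ₗ[ℝ] V) :=
  {w | w ∈ R.weyl ∧ ∀ w' ∈ R.weyl, w⁻¹ * w' ∈ R.parabolic I → R.len w ≤ R.len w'}

end RootSystemData

/-- The relative volume `rVol_Λ(X)` of a finite (linearly independent) set `X` with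
respect to a lattice `Λ`: the number of `Λ`-points in the half-open parallelepiped
`Σ_{x ∈ X} [0, x)` (equivalently, the gcd of the maximal minors of the matrix
expressing the elements of `X` in a basis of `Λ`). -/
noncomputable def rVol {V : Type*} [AddCommGroup V] [Module ℝ V]
    (Λ : AddSubgroup V) (X : Finset V) : ℕ :=
  {v : V | v ∈ Λ ∧ ∃ c : V → ℝ, (∀ x ∈ X, 0 ≤ c x ∧ c x < 1) ∧
    v = ∑ x ∈ X, c x • x}.ncard

/-! For `u ∈ U`, `u ≠ 0`, let `h(u) = max_{β ∈ Φ ∩ U} ⟪β, u⟫`. The heart of the matter is that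
every root satisfies `⟪γ, u⟫ < 2 h(u)`. Otherwise take a root `α` maximizing `⟪·, u⟫` and its
projection `μ` to `U`: maximality and integrality force `⟨β, α^∨⟩ = 1` whenever `β ∈ Φ ∩ U` and
`⟪β, α⟫ > 0`, so for a simple system of `Φ ∩ U` chosen lexicographically from `μ` and `-u`, both
`μ` and `h(u) μ - (‖α‖²/2) u` are dominant and hence have nonnegative inner product; but this
product is negative since `‖μ‖ < ‖α‖`. Compactness of the unit sphere of `U` makes the bound
uniform with some `κ < 2`, and Hahn–Banach turns the resulting support-function inequality into
`π_U(γ) ∈ κ • 𝒫_{Φ_U}`. -/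

section SupportFunction

variable {V : Type*} [NormedAddCommGroup V] [InnerProductSpace ℝ V]

noncomputable def supportFun (s : Finset V) (hs : s.Nonempty) (u : V) : ℝ :=
  s.sup' hs fun β => ⟪β, u⟫

variable {s : Finset V} (hs : s.Nonempty)

theorem inner_le_supportFun {β : V} (hβ : β ∈ s) (u : V) : ⟪β, u⟫ ≤ supportFun s hs u :=
  Finset.le_sup' (fun β => ⟪β, u⟫) hβ

theorem supportFun_lt_iff {u : V} {t : ℝ} : supportFun s hs u < t ↔ ∀ β ∈ s, ⟪β, u⟫ < t :=
  Finset.sup'_lt_iff hs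

theorem supportFun_smul {c : ℝ} (hc : 0 ≤ c) (u : V) :
    supportFun s hs (c • u) = c * supportFun s hs u := by
  simp only [supportFun, Finset.mul₀_sup' hc, real_inner_smul_right]

theorem continuous_supportFun : Continuous (supportFun s hs) :=
  Continuous.finset_sup'_apply hs fun _ _ => continuous_const.inner continuous_id

theorem supportFun_nonneg (hneg : ∀ β ∈ s, -β ∈ s) (u : V) : 0 ≤ supportFun s hs u := by
  obtain ⟨β, hβ⟩ := id hs
  have h := inner_le_supportFun hs (hneg β hβ) u
  rw [inner_neg_left] at h
  linarith [inner_le_supportFun hs hβ u]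

theorem supportFun_pos (hneg : ∀ β ∈ s, -β ∈ s) {u : V} (hu : u ∈ Submodule.span ℝ (s : Set V))
    (hu0 : u ≠ 0) : 0 < supportFun s hs u := by
  by_contra! hle
  have horth : ∀ β ∈ s, ⟪β, u⟫ = 0 := fun β hβ => by
    have h := inner_le_supportFun hs (hneg β hβ) u
    rw [inner_neg_left] at h
    linarith [inner_le_supportFun hs hβ u]
  have hspan : Submodule.span ℝ (s : Set V) ⟂ Submodule.span ℝ {u} :=
    Submodule.isOrtho_span.2 fun β hβ v hv => by rw [Set.mem_singleton_iff.1 hv]; exact horth β hβ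
  exact hu0 (inner_self_eq_zero.1 (hspan.inner_eq hu (Submodule.mem_span_singleton_self u)))

theorem supportFun_congr {u v : V} (h : ∀ β ∈ s, ⟪β, u⟫ = ⟪β, v⟫) :
    supportFun s hs u = supportFun s hs v :=
  Finset.sup'_congr hs rfl h

theorem mem_convexHull_of_inner_le_supportFun [CompleteSpace V] {x : V}
    (hx : ∀ u, ⟪x, u⟫ ≤ supportFun s hs u) : x ∈ convexHull ℝ (s : Set V) := by
  by_contra hxs
  obtain ⟨f, t, hf, htx⟩ := geometric_hahn_banach_closed_point (convex_convexHull ℝ _)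
    (s.finite_toSet.isCompact_convexHull ℝ).isClosed hxs
  set w := (InnerProductSpace.toDual ℝ V).symm f
  have hfw : ∀ y, f y = ⟪y, w⟫ := fun y => by
    rw [real_inner_comm, InnerProductSpace.toDual_symm_apply]
  have hsup : supportFun s hs w < t := (supportFun_lt_iff hs).2 fun β hβ =>
    hfw β ▸ hf β (subset_convexHull ℝ _ hβ)
  linarith [hx w, hfw x]

theorem mem_smul_convexHull_of_inner_le [CompleteSpace V] (U : Submodule ℝ V)
    [U.HasOrthogonalProjection] (hsU : ∀ β ∈ s, β ∈ U) {x : V} (hx : x ∈ U) {κ : ℝ} (hκ : 0 < κ)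
    (h : ∀ u ∈ U, ⟪x, u⟫ ≤ κ * supportFun s hs u) : x ∈ κ • convexHull ℝ (s : Set V) := by
  rw [Set.mem_smul_set_iff_inv_smul_mem₀ hκ.ne']
  refine mem_convexHull_of_inner_le_supportFun hs fun u => ?_
  have hproj : ∀ y ∈ U, ⟪y, U.starProjection u⟫ = ⟪y, u⟫ := fun y hy => by
    rw [← U.inner_starProjection_left_eq_right, U.starProjection_eq_self_iff.2 hy]
  rw [real_inner_smul_left, ← hproj x hx, ← supportFun_congr hs fun β hβ => hproj β (hsU β hβ),
    inv_mul_le_iff₀ hκ]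
  exact h _ (U.starProjection_apply_mem u)

end SupportFunction

theorem Submodule.inner_starProjection_of_mem_right {V : Type*} [NormedAddCommGroup V]
    [InnerProductSpace ℝ V] (U : Submodule ℝ V) [U.HasOrthogonalProjection] (x : V) {u : V}
    (hu : u ∈ U) : ⟪U.starProjection x, u⟫ = ⟪x, u⟫ :=
  U.inner_orthogonalProjectionOnto_eq_of_mem_right ⟨u, hu⟩ x

theorem exists_lt_forall_le_mul_of_homogeneous {E : Type*} [NormedAddCommGroup E]
    [NormedSpace ℝ E] [FiniteDimensional ℝ E] [Nontrivial E] {f g : E → ℝ}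
    (hf : Continuous f) (hg : Continuous g) (hf_smul : ∀ c : ℝ, 0 ≤ c → ∀ x, f (c • x) = c * f x)
    (hg_smul : ∀ c : ℝ, 0 ≤ c → ∀ x, g (c • x) = c * g x) (hg_pos : ∀ x, x ≠ 0 → 0 < g x)
    {c : ℝ} (hfg : ∀ x, x ≠ 0 → f x < c * g x) : ∃ κ < c, ∀ x, f x ≤ κ * g x := by
  have hsphere : ∀ x ∈ Metric.sphere (0 : E) 1, x ≠ 0 := fun x hx =>
    ne_zero_of_mem_sphere one_ne_zero ⟨x, hx⟩
  obtain ⟨x₀, hx₀, hmax⟩ := (isCompact_sphere (0 : E) 1).exists_isMaxOn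
    (NormedSpace.sphere_nonempty.2 zero_le_one)
    (hf.continuousOn.div hg.continuousOn fun x hx => (hg_pos x (hsphere x hx)).ne')
  have hg₀ := hg_pos x₀ (hsphere x₀ hx₀)
  refine ⟨f x₀ / g x₀, (div_lt_iff₀ hg₀).2 (hfg x₀ (hsphere x₀ hx₀)), fun x => ?_⟩
  rcases eq_or_ne x 0 with rfl | hx
  · have h0 : ∀ φ : E → ℝ, (∀ c : ℝ, 0 ≤ c → ∀ x, φ (c • x) = c * φ x) → φ 0 = 0 :=
      fun φ hφ => by simpa using hφ 0 le_rfl 0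
    simp [h0 f hf_smul, h0 g hg_smul]
  have hx' : ‖x‖ ≠ 0 := norm_ne_zero_iff.2 hx
  have hy : ‖x‖⁻¹ • x ∈ Metric.sphere (0 : E) 1 := by
    rw [mem_sphere_zero_iff_norm, norm_smul, norm_inv, norm_norm, inv_mul_cancel₀ hx']
  have hfy : f (‖x‖⁻¹ • x) / g (‖x‖⁻¹ • x) ≤ f x₀ / g x₀ := hmax hy
  rw [div_le_iff₀ (hg_pos _ (hsphere _ hy))] at hfy
  rw [← smul_inv_smul₀ hx' x, hf_smul _ (norm_nonneg x), hg_smul _ (norm_nonneg x)]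
  nlinarith [norm_nonneg x]

section SimpleSystem

open Finset

variable {V : Type*} [NormedAddCommGroup V] [InnerProductSpace ℝ V]

theorem inner_nonneg_of_pairwise_inner_nonpos {Δ : Finset V}
    (hΔ : (Δ : Set V).Pairwise fun a b => ⟪a, b⟫ ≤ 0) {x y : V}
    (hx : x ∈ Submodule.span ℝ (Δ : Set V)) (hxΔ : ∀ δ ∈ Δ, 0 ≤ ⟪x, δ⟫)
    (hyΔ : ∀ δ ∈ Δ, 0 ≤ ⟪δ, y⟫) : 0 ≤ ⟪x, y⟫ := by
  obtain ⟨c, -, hc⟩ := Submodule.mem_span_finset.1 hx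
  set p := ∑ δ ∈ Δ, (c δ)⁺ • δ
  set m := ∑ δ ∈ Δ, (c δ)⁻ • δ
  have hxpm : x = p - m := by
    simp only [p, m, ← hc, ← sum_sub_distrib, ← sub_smul, posPart_sub_negPart]
  have hpm : ⟪p, m⟫ ≤ 0 := by
    simp only [p, m, sum_inner, inner_sum, real_inner_smul_left, real_inner_smul_right]
    refine sum_nonpos fun i hi => sum_nonpos fun j hj => ?_
    rcases eq_or_ne i j with rfl | hij
    · rcases le_total (c i) 0 with h | h <;> simp [h]
    · exact mul_nonpos_of_nonneg_of_nonpos (negPart_nonneg _)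
        (mul_nonpos_of_nonneg_of_nonpos (posPart_nonneg _) (hΔ hj hi hij.symm))
  have hxm : 0 ≤ ⟪x, m⟫ := by
    simp only [m, inner_sum, real_inner_smul_right]
    exact sum_nonneg fun δ hδ => mul_nonneg (negPart_nonneg _) (hxΔ δ hδ)
  have hm : m = 0 := by
    have hmm : ⟪m, m⟫ = ⟪p, m⟫ - ⟪x, m⟫ := by rw [hxpm, inner_sub_left]; ring
    exact inner_self_eq_zero.1 (le_antisymm (by linarith) real_inner_self_nonneg)
  rw [hxpm, hm, sub_zero]
  simp only [p, sum_inner, real_inner_smul_left]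
  exact sum_nonneg fun δ hδ => mul_nonneg (posPart_nonneg _) (hyΔ δ hδ)

/-- `Δ` consists of the indecomposable elements of `{β ∈ S | 0 < f β}`. -/
theorem Finset.exists_pairwise_inner_nonpos_of_sub_mem {Γ : Type*} [AddCommGroup Γ]
    [LinearOrder Γ] [IsOrderedAddMonoid Γ] (S : Finset V) (f : V →+ Γ) (hf : ∀ β ∈ S, f β ≠ 0)
    (hneg : ∀ β ∈ S, -β ∈ S) (hsub : ∀ β ∈ S, ∀ γ ∈ S, β ≠ γ → 0 < ⟪β, γ⟫ → β - γ ∈ S) :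
    ∃ Δ ⊆ S, (∀ δ ∈ Δ, 0 < f δ) ∧ (Δ : Set V).Pairwise (fun a b => ⟪a, b⟫ ≤ 0) ∧
      Submodule.span ℝ (S : Set V) ≤ Submodule.span ℝ (Δ : Set V) := by
  classical
  set P := S.filter (0 < f ·)
  set Δ := P.filter fun δ => ∀ γ ∈ P, δ - γ ∉ P
  have hcover : ∀ β ∈ S, β ∈ P ∨ -β ∈ P := fun β hβ => by
    rcases (hf β hβ).lt_or_gt with h | h
    · exact Or.inr (mem_filter.2 ⟨hneg β hβ, by rwa [map_neg, neg_pos]⟩)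
    · exact Or.inl (mem_filter.2 ⟨hβ, h⟩)
  have hPspan : ∀ β ∈ P, β ∈ Submodule.span ℝ (Δ : Set V) := by
    by_contra! hP
    obtain ⟨β, hβ, hmin⟩ :=
      (P.filter (· ∉ Submodule.span ℝ (Δ : Set V))).exists_min_image f
        (let ⟨β, hβ, hβΔ⟩ := hP; ⟨β, mem_filter.2 ⟨hβ, hβΔ⟩⟩)
    rw [mem_filter] at hβ
    have hlt : ∀ γ ∈ P, β - γ ∈ P → γ ∈ Submodule.span ℝ (Δ : Set V) := fun γ hγ hβγ => by
      by_contra hγΔ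
      have hγβ : f γ < f β := sub_pos.1 (by simpa using (mem_filter.1 hβγ).2)
      exact (hmin γ (mem_filter.2 ⟨hγ, hγΔ⟩)).not_gt hγβ
    obtain ⟨γ, hγ, hβγ⟩ : ∃ γ ∈ P, β - γ ∈ P := by
      by_contra! h
      exact hβ.2 (Submodule.subset_span (mem_filter.2 ⟨hβ.1, h⟩))
    apply hβ.2
    simpa using add_mem (hlt γ hγ hβγ) (hlt (β - γ) hβγ (by simpa using hγ))
  refine ⟨Δ, fun δ hδ => (mem_filter.1 (mem_filter.1 hδ).1).1,
    fun δ hδ => (mem_filter.1 (mem_filter.1 hδ).1).2, ?_, ?_⟩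
  · intro δ hδ δ' hδ' hne
    by_contra! hpos
    rw [mem_coe, mem_filter] at hδ hδ'
    rcases hcover _ (hsub δ (mem_filter.1 hδ.1).1 δ' (mem_filter.1 hδ'.1).1 hne hpos) with h | h
    · exact hδ.2 δ' hδ'.1 h
    · exact hδ'.2 δ hδ.1 (by simpa using h)
  · refine Submodule.span_le.2 fun β hβ => ?_
    rcases hcover β hβ with h | h
    · exact hPspan β h
    · simpa using Submodule.neg_mem _ (hPspan _ h)

/-- A simple system adapted to `μ` and then to `-u`: it comes from the lexicographic order of
`β ↦ (⟪μ, β⟫, -⟪u, β⟫, ⟪β, ζ⟫)` for a `ζ` pairing nontrivially with all of `S`. -/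
theorem Finset.exists_pairwise_inner_nonpos_lex (S : Finset V) (hS : ∀ β ∈ S, β ≠ 0)
    (hneg : ∀ β ∈ S, -β ∈ S) (hsub : ∀ β ∈ S, ∀ γ ∈ S, β ≠ γ → 0 < ⟪β, γ⟫ → β - γ ∈ S)
    (μ u : V) :
    ∃ Δ ⊆ S, (Δ : Set V).Pairwise (fun a b => ⟪a, b⟫ ≤ 0) ∧
      Submodule.span ℝ (S : Set V) ≤ Submodule.span ℝ (Δ : Set V) ∧
      ∀ δ ∈ Δ, 0 ≤ ⟪μ, δ⟫ ∧ (⟪μ, δ⟫ = 0 → ⟪u, δ⟫ ≤ 0) := by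
  obtain ⟨ζ, hζ⟩ := Module.Dual.exists_forall_ne_zero_of_forall_exists
    (fun β : S => innerₛₗ ℝ (β : V)) fun β => ⟨β, by simpa using hS β β.2⟩
  let f : V →+ ℝ ×ₗ ℝ ×ₗ ℝ :=
    { toFun := fun β => toLex (⟪μ, β⟫, toLex (-⟪u, β⟫, ⟪β, ζ⟫))
      map_zero' := by simp
      map_add' := fun x y => by simp only [inner_add_left, inner_add_right, neg_add]; rfl }
  have hf : ∀ β ∈ S, f β ≠ 0 := fun β hβ h => hζ ⟨β, hβ⟩ (by
    simpa [f] using congrArg (fun p => (ofLex (ofLex p).2).2) h)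
  obtain ⟨Δ, hΔS, hpos, hobt, hspan⟩ := S.exists_pairwise_inner_nonpos_of_sub_mem f hf hneg hsub
  refine ⟨Δ, hΔS, hobt, hspan, fun δ hδ => ?_⟩
  have h : (0 : ℝ ×ₗ ℝ ×ₗ ℝ) < toLex (⟪μ, δ⟫, toLex (-⟪u, δ⟫, ⟪δ, ζ⟫)) := hpos δ hδ
  simp only [Prod.Lex.lt_iff, ofLex_toLex, ofLex_zero, Prod.fst_zero, Prod.snd_zero] at h
  rcases h with h | ⟨h0, h | ⟨h1, -⟩⟩
  · exact ⟨h.le, fun h' => absurd h' h.ne'⟩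
  · exact ⟨h0.le, fun _ => by linarith⟩
  · exact ⟨h0.le, fun _ => by linarith⟩

end SimpleSystem

namespace RootSystemData

variable {V : Type*} [NormedAddCommGroup V] [InnerProductSpace ℝ V] {n : ℕ}
  (R : RootSystemData V n)

theorem neg_mem {α : V} (hα : α ∈ R.Φ) : -α ∈ R.Φ := by
  have h : -α ∈ (Submodule.span ℝ {α} : Set V) ∩ R.Φ := by rw [R.reduced α hα]; simp
  exact h.2

theorem inner_self_pos {α : V} (hα : α ∈ R.Φ) : 0 < ⟪α, α⟫ :=
  real_inner_self_pos.2 (R.nonzero α hα)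

theorem exists_int_two_mul_inner_eq {α β : V} (hα : α ∈ R.Φ) (hβ : β ∈ R.Φ) :
    ∃ z : ℤ, 2 * ⟪β, α⟫ = z * ⟪α, α⟫ := by
  obtain ⟨z, hz⟩ := R.crystal α hα β hβ
  refine ⟨z, ?_⟩
  rw [corootOf, real_inner_smul_right, div_mul_eq_mul_div, div_eq_iff (R.inner_self_pos hα).ne']
    at hz
  exact hz

theorem sub_int_smul_mem {α β : V} (hα : α ∈ R.Φ) (hβ : β ∈ R.Φ) {z : ℤ}
    (hz : 2 * ⟪β, α⟫ = z * ⟪α, α⟫) : β - (z : ℝ) • α ∈ R.Φ := by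
  have h := R.reflect_mem α hα β hβ
  rwa [rsReflect, corootOf, real_inner_smul_right, div_mul_eq_mul_div, hz,
    mul_div_cancel_right₀ _ (R.inner_self_pos hα).ne'] at h

theorem eq_of_inner_eq_norm_mul {α β : V} (hα : α ∈ R.Φ) (hβ : β ∈ R.Φ)
    (h : ⟪α, β⟫ = ‖α‖ * ‖β‖) : α = β := by
  have hβ0 : ‖β‖ ≠ 0 := norm_ne_zero_iff.2 (R.nonzero β hβ)
  have hspan : α ∈ (Submodule.span ℝ {β} : Set V) ∩ R.Φ := by
    refine ⟨Submodule.mem_span_singleton.2 ⟨‖α‖ / ‖β‖, ?_⟩, hα⟩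
    rw [div_eq_inv_mul, mul_smul, ← inner_eq_norm_mul_iff_real.1 h, inv_smul_smul₀ hβ0]
  rw [R.reduced β hβ] at hspan
  rcases hspan with h' | h'
  · exact h'
  · rw [Set.mem_singleton_iff.1 h', inner_neg_left, norm_neg, real_inner_self_eq_norm_mul_norm]
      at h
    nlinarith [norm_pos_iff.2 (R.nonzero β hβ)]

theorem sub_mem_of_inner_pos {α β : V} (hα : α ∈ R.Φ) (hβ : β ∈ R.Φ) (hne : α ≠ β)
    (hpos : 0 < ⟪α, β⟫) : α - β ∈ R.Φ := by
  obtain ⟨a, ha⟩ := R.exists_int_two_mul_inner_eq hβ hα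
  obtain ⟨b, hb⟩ := R.exists_int_two_mul_inner_eq hα hβ
  rw [real_inner_comm] at hb
  have hαα := R.inner_self_pos hα
  have hββ := R.inner_self_pos hβ
  have ha0 : (0 : ℝ) < a := pos_of_mul_pos_left (by linarith) hββ.le
  have hb0 : (0 : ℝ) < b := pos_of_mul_pos_left (by linarith) hαα.le
  by_cases ha1 : a = 1
  · subst ha1
    simpa using R.sub_int_smul_mem hβ hα ha
  by_cases hb1 : b = 1
  · subst hb1
    simpa using R.neg_mem (R.sub_int_smul_mem hα hβ (z := 1) (by rwa [real_inner_comm]))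
  -- otherwise `a, b ≥ 2`, which forces equality in Cauchy–Schwarz
  have ha2 : (2 : ℝ) ≤ a := by
    have : (0 : ℤ) < a := by exact_mod_cast ha0
    exact_mod_cast (by omega : 2 ≤ a)
  have hb2 : (2 : ℝ) ≤ b := by
    have : (0 : ℤ) < b := by exact_mod_cast hb0
    exact_mod_cast (by omega : 2 ≤ b)
  have hsq : (‖α‖ * ‖β‖) ^ 2 ≤ ⟪α, β⟫ ^ 2 := by
    rw [mul_pow, ← real_inner_self_eq_norm_sq, ← real_inner_self_eq_norm_sq]
    nlinarith [mul_le_mul ha2 hb2 zero_le_two ha0.le, mul_pos hαα hββ]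
  rw [pow_le_pow_iff_left₀ (by positivity) hpos.le two_ne_zero] at hsq
  exact absurd (R.eq_of_inner_eq_norm_mul hα hβ (le_antisymm (real_inner_le_norm α β) hsq)) hne

/-- A larger positive `⟨β, α^∨⟩` would make the root `⟨β, α^∨⟩ α - β` pair with `u` more than
`α` does. -/
theorem two_mul_inner_eq_inner_self_of_max {u α β : V} (hα : α ∈ R.Φ) (hβ : β ∈ R.Φ)
    (hmax : ∀ γ ∈ R.Φ, ⟪γ, u⟫ ≤ ⟪α, u⟫) (hαu : 0 < ⟪α, u⟫) (hβu : 2 * ⟪β, u⟫ ≤ ⟪α, u⟫)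
    (hβα : 0 < ⟪β, α⟫) : 2 * ⟪β, α⟫ = ⟪α, α⟫ := by
  obtain ⟨z, hz⟩ := R.exists_int_two_mul_inner_eq hα hβ
  have hαα := R.inner_self_pos hα
  have hz0 : (0 : ℝ) < z := pos_of_mul_pos_left (by linarith) hαα.le
  have hle : ⟪-(β - (z : ℝ) • α), u⟫ ≤ ⟪α, u⟫ := hmax _ (R.neg_mem (R.sub_int_smul_mem hα hβ hz))
  rw [inner_neg_left, inner_sub_left, real_inner_smul_left] at hle
  have hz1 : z = 1 := by
    have : (z : ℝ) < 2 := by nlinarith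
    have : z < 2 := by exact_mod_cast this
    have : 0 < z := by exact_mod_cast hz0
    omega
  simpa [hz1] using hz

noncomputable def rootsIn (U : Submodule ℝ V) : Finset V :=
  (R.finite.subset (Set.inter_subset_left (t := (U : Set V)))).toFinset

variable {R} {U : Submodule ℝ V}

theorem coe_rootsIn : (R.rootsIn U : Set V) = R.Φ ∩ U :=
  Set.Finite.coe_toFinset _

theorem mem_rootsIn {β : V} : β ∈ R.rootsIn U ↔ β ∈ R.Φ ∧ β ∈ U :=
  Set.Finite.mem_toFinset _

theorem neg_mem_rootsIn {β : V} (hβ : β ∈ R.rootsIn U) : -β ∈ R.rootsIn U :=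
  mem_rootsIn.2 ⟨R.neg_mem (mem_rootsIn.1 hβ).1, U.neg_mem (mem_rootsIn.1 hβ).2⟩

theorem inner_lt_two_mul_supportFun [U.HasOrthogonalProjection]
    (hU : U ≤ Submodule.span ℝ (R.rootsIn U : Set V)) (hne : (R.rootsIn U).Nonempty)
    {u : V} (hu : u ∈ U) (hu0 : u ≠ 0) {γ : V} (hγ : γ ∈ R.Φ) :
    ⟪γ, u⟫ < 2 * supportFun (R.rootsIn U) hne u := by
  set S := R.rootsIn U
  set h := supportFun S hne u
  by_contra! hγu
  have hh : 0 < h := supportFun_pos hne (fun _ => neg_mem_rootsIn) (hU hu) hu0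
  obtain ⟨α, hα, hmax⟩ := R.Φ.exists_max_image (⟪·, u⟫) R.finite ⟨γ, hγ⟩
  have hαu : 2 * h ≤ ⟪α, u⟫ := hγu.trans (hmax γ hγ)
  have hαU : α ∉ U := fun hαU => by
    linarith [inner_le_supportFun hne (mem_rootsIn.2 ⟨hα, hαU⟩) u]
  have hhalf : ∀ β ∈ S, 0 < ⟪β, α⟫ → 2 * ⟪β, α⟫ = ⟪α, α⟫ := fun β hβ =>
    R.two_mul_inner_eq_inner_self_of_max hα (mem_rootsIn.1 hβ).1 hmax (by linarith)
      (by linarith [inner_le_supportFun hne hβ u])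
  set μ := U.starProjection α
  have hμ : ∀ v ∈ U, ⟪μ, v⟫ = ⟪α, v⟫ := fun v hv => U.inner_starProjection_of_mem_right α hv
  have hμα : ⟪μ, μ⟫ < ⟪α, α⟫ := by
    rw [real_inner_self_eq_norm_sq, real_inner_self_eq_norm_sq]
    have hlt : ‖μ‖ < ‖α‖ := (U.norm_starProjection_apply_le α).lt_of_ne
      fun h => hαU ((U.mem_iff_norm_starProjection α).2 h)
    gcongr
  obtain ⟨Δ, hΔS, hobt, hspan, hdom⟩ := S.exists_pairwise_inner_nonpos_lex
    (fun β hβ => R.nonzero β (mem_rootsIn.1 hβ).1) (fun _ => neg_mem_rootsIn)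
    (fun β hβ γ hγ hne hpos => mem_rootsIn.2 ⟨R.sub_mem_of_inner_pos (mem_rootsIn.1 hβ).1
      (mem_rootsIn.1 hγ).1 hne hpos, U.sub_mem (mem_rootsIn.1 hβ).2 (mem_rootsIn.1 hγ).2⟩) μ u
  set q := h • μ - (⟪α, α⟫ / 2) • u
  have hq : ∀ δ ∈ Δ, 0 ≤ ⟪δ, q⟫ := fun δ hδ => by
    have hδS := hΔS hδ
    have hδμ : ⟪μ, δ⟫ = ⟪δ, α⟫ := by rw [hμ δ (mem_rootsIn.1 hδS).2, real_inner_comm]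
    have hδq : ⟪δ, q⟫ = h * ⟪δ, α⟫ - ⟪α, α⟫ / 2 * ⟪δ, u⟫ := by
      rw [inner_sub_right, real_inner_smul_right, real_inner_smul_right, real_inner_comm μ δ, hδμ]
    obtain ⟨hμδ, hμδ0⟩ := hdom δ hδ
    rw [hδμ] at hμδ hμδ0
    rw [hδq]
    rcases hμδ.lt_or_eq with hpos | hzero
    · have := hhalf δ hδS hpos
      nlinarith [inner_le_supportFun hne hδS u, R.inner_self_pos hα]
    · have := hμδ0 hzero.symm
      rw [real_inner_comm] at this
      rw [← hzero]
      nlinarith [R.inner_self_pos hα]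
  have hμq : ⟪μ, q⟫ = h * ⟪μ, μ⟫ - ⟪α, α⟫ / 2 * ⟪α, u⟫ := by
    simp only [q, inner_sub_right, real_inner_smul_right, hμ u hu]
  have := inner_nonneg_of_pairwise_inner_nonpos hobt (hspan (hU (U.starProjection_apply_mem α)))
    (fun δ hδ => (hdom δ hδ).1) hq
  nlinarith [mul_lt_mul_of_pos_left hμα hh, R.inner_self_pos hα]

theorem exists_inner_le_mul_supportFun [FiniteDimensional ℝ V] (hU0 : U ≠ ⊥)
    (hU : U ≤ Submodule.span ℝ (R.rootsIn U : Set V)) (hne : (R.rootsIn U).Nonempty) :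
    ∃ κ, 1 ≤ κ ∧ κ < 2 ∧ ∀ γ ∈ R.Φ, ∀ u ∈ U, ⟪γ, u⟫ ≤ κ * supportFun (R.rootsIn U) hne u := by
  have : Nontrivial U := Submodule.nontrivial_iff_ne_bot.2 hU0
  have hΦ : R.finite.toFinset.Nonempty :=
    hne.mono fun β hβ => R.finite.mem_toFinset.2 (mem_rootsIn.1 hβ).1
  obtain ⟨κ, hκ, hle⟩ := exists_lt_forall_le_mul_of_homogeneous (E := U)
    ((continuous_supportFun hΦ).comp continuous_subtype_val)
    ((continuous_supportFun hne).comp continuous_subtype_val)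
    (fun c hc x => supportFun_smul hΦ hc x) (fun c hc x => supportFun_smul hne hc x)
    (fun x hx => supportFun_pos hne (fun _ => neg_mem_rootsIn) (hU x.2) (by simpa using hx))
    fun x hx => (supportFun_lt_iff hΦ).2 fun γ hγ =>
      inner_lt_two_mul_supportFun hU hne x.2 (by simpa using hx) (R.finite.mem_toFinset.1 hγ)
  refine ⟨max κ 1, le_max_right _ _, max_lt hκ one_lt_two, fun γ hγ u hu => ?_⟩
  calc ⟪γ, u⟫ ≤ supportFun R.finite.toFinset hΦ u :=
        inner_le_supportFun hΦ (R.finite.mem_toFinset.2 hγ) u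
    _ ≤ κ * supportFun (R.rootsIn U) hne u := hle ⟨u, hu⟩
    _ ≤ max κ 1 * supportFun (R.rootsIn U) hne u := mul_le_mul_of_nonneg_right (le_max_left _ _)
        (supportFun_nonneg hne (fun _ => neg_mem_rootsIn) u)

end RootSystemData

/-- Lemma 1.5, projection-dilation property of root polytopes:
there is `1 ≤ κ < 2` with `π_U(𝒫_Φ) ⊆ κ·𝒫_{Φ_U}`. -/
theorem root_polytope_projection_dilation {V : Type*} [NormedAddCommGroup V]
    [InnerProductSpace ℝ V] [FiniteDimensional ℝ V]
    {n : ℕ} (R : RootSystemData V n) (U : Submodule ℝ V) (hU : U ≠ ⊥)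
    (hUspan : ∃ S ⊆ R.Φ, Submodule.span ℝ S = U) :
    ∃ κ : ℝ, 1 ≤ κ ∧ κ < 2 ∧
      (fun v => ((U.orthogonalProjection v : U) : V)) '' (convexHull ℝ R.Φ) ⊆
        κ • convexHull ℝ (R.Φ ∩ (U : Set V)) := by
  obtain ⟨S, hSΦ, hSU⟩ := hUspan
  have hUroots : U ≤ Submodule.span ℝ (R.rootsIn U : Set V) := hSU ▸ Submodule.span_mono
    fun β hβ => R.mem_rootsIn.2 ⟨hSΦ hβ, hSU ▸ Submodule.subset_span hβ⟩
  have hne : (R.rootsIn U).Nonempty := by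
    refine Finset.nonempty_iff_ne_empty.2 fun h => hU (eq_bot_iff.2 ?_)
    simpa [h] using hUroots
  obtain ⟨κ, hκ1, hκ2, hκ⟩ := R.exists_inner_le_mul_supportFun hU hUroots hne
  refine ⟨κ, hκ1, hκ2, ?_⟩
  rw [← RootSystemData.coe_rootsIn]
  change (U.starProjection : V →ₗ[ℝ] V) '' _ ⊆ _
  rw [LinearMap.image_convexHull]
  refine convexHull_min ?_ ((convex_convexHull ℝ _).smul κ)
  rintro _ ⟨γ, hγ, rfl⟩
  exact mem_smul_convexHull_of_inner_le hne U (fun β hβ => (R.mem_rootsIn.1 hβ).2)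
    (U.starProjection_apply_mem γ) (by linarith) fun u hu =>
      (U.inner_starProjection_of_mem_right γ hu).trans_le (hκ γ hγ u hu)
end

section
/- Let a = (1,…,1,0,…,0) ∈ ℤ^{n+1} have i ones followed by n+1−i zeros, where 1 ≤ i ≤ n+1, and let λ ⊢ n+1 be a partition of n+1. Then #quot_λ(Π(a) ∩ ℤ^{n+1}) equals the number of tuples (μ_1,…,μ_{ℓ(λ)}) ∈ ℤ_{≥0}^{ℓ(λ)} with μ_j ≤ λ_j for all j and Σ_j μ_j = i, i.e., the number of compositions of i whose diagram fits inside the Young diagram of λ. -/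
/-! The integer points of the hypersimplex `Π(1^i 0^{n+1-i})` are exactly its vertices, the
0/1-vectors with `i` ones, i.e. the indicator vectors of the `i`-subsets `s` of `{0, …, n}`.
The `j`-th coordinate of `quot_λ` of such a vector is the number of elements of `s` in the
`j`-th block, so the image consists of the vectors `(#(s ∩ B_j))_j`. These are exactly the
`μ` with `μ_j ≤ λ_j = #B_j` and `∑ μ_j = i`: any such `μ` is realised by choosing `μ_j`
elements in each block `B_j`. -/

/-- The lattice `ℤ^n` inside `ℝ^n`. -/
def intLattice (n : ℕ) : Set (Fin n → ℝ) := {v | ∀ i, ∃ z : ℤ, v i = (z : ℝ)}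

/-- The permutohedron `Π(a) ⊆ ℝ^{n+1}`: the convex hull of the coordinate
permutations of `a`. -/
noncomputable def permA {n : ℕ} (a : Fin (n + 1) → ℝ) : Set (Fin (n + 1) → ℝ) :=
  convexHull ℝ {x | ∃ σ : Equiv.Perm (Fin (n + 1)), x = fun i => a (σ i)}

/-- For a partition with parts `lam 0 ≥ lam 1 ≥ …` (of length `l`), the quotient map
`quot_λ : ℝ^{n+1} ↠ ℝ^{ℓ(λ)}` whose `j`-th coordinate is the sum of the entries over
the `j`-th consecutive block of sizes `lam 0, …, lam (l-1)`. -/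
noncomputable def quotPart {n : ℕ} (l : ℕ) (lam : Fin l → ℕ) (b : Fin (n + 1) → ℝ) :
    Fin l → ℝ :=
  fun j => ∑ i ∈ Finset.univ.filter (fun i : Fin (n + 1) =>
      (∑ j' ∈ Finset.univ.filter (fun j' : Fin l => j' < j), lam j') ≤ i.1 ∧
        i.1 < (∑ j' ∈ Finset.univ.filter (fun j' : Fin l => j' < j), lam j') + lam j),
    b i

open Finset

section Fiberwise

variable {α ι : Type*} [DecidableEq ι]

def fiberCounts (f : α → ι) (s : Finset α) (j : ι) : ℕ := #{a ∈ s | f a = j}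

theorem image_fiberCounts [Fintype α] [DecidableEq α] [Fintype ι] (f : α → ι) (k : ℕ) :
    fiberCounts f '' {s | #s = k} =
      {μ : ι → ℕ | (∀ j, μ j ≤ #{a | f a = j}) ∧ ∑ j, μ j = k} := by
  ext μ
  constructor
  · rintro ⟨s, rfl, rfl⟩
    exact ⟨fun j => card_le_card (filter_subset_filter _ (subset_univ s)),
      (card_eq_sum_card_fiberwise fun a _ => mem_univ (f a)).symm⟩
  · rintro ⟨hle, rfl⟩
    choose t hsub hcard using fun j => exists_subset_card_eq (hle j)
    have hft : ∀ j a, a ∈ t j → f a = j := fun j a ha => (mem_filter.1 (hsub j ha)).2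
    have hfiber : fiberCounts f (univ.biUnion t) = μ := by
      funext j
      rw [fiberCounts, ← hcard j]
      congr 1
      ext a
      simp only [mem_filter, mem_biUnion, mem_univ, true_and]
      grind
    refine ⟨univ.biUnion t, ?_, hfiber⟩
    change #_ = _
    rw [card_eq_sum_card_fiberwise fun a _ => mem_univ (f a)]
    exact congrArg (fun ν : ι → ℕ => ∑ j, ν j) hfiber

end Fiberwise

section Permutohedron

variable {n : ℕ}

def indicatorVec (s : Finset (Fin (n + 1))) : Fin (n + 1) → ℝ :=
  fun t => if t ∈ s then 1 else 0

lemma sum_indicatorVec (s : Finset (Fin (n + 1))) : ∑ t, indicatorVec s t = #s := by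
  simp [indicatorVec]

lemma indicatorVec_mem_intLattice (s : Finset (Fin (n + 1))) :
    indicatorVec s ∈ intLattice (n + 1) :=
  fun t => ⟨if t ∈ s then 1 else 0, by simp [indicatorVec, apply_ite]⟩

lemma eq_indicatorVec_of_mem_intLattice {x : Fin (n + 1) → ℝ} (hx : x ∈ intLattice (n + 1))
    (hbd : x ∈ Set.univ.pi fun _ => Set.Icc 0 1) : x = indicatorVec {t | x t = 1} := by
  funext t
  obtain ⟨z, hz⟩ := hx t
  have hz01 : (0 : ℝ) ≤ z ∧ (z : ℝ) ≤ 1 := by simpa [hz] using hbd t (Set.mem_univ t)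
  obtain rfl | rfl : z = 0 ∨ z = 1 := by
    obtain ⟨h0, h1⟩ := hz01
    norm_cast at h0 h1
    omega
  all_goals simp [indicatorVec, hz]

variable (p : Fin (n + 1) → Prop) [DecidablePred p]

lemma permA_ite_subset :
    permA (fun t => if p t then (1 : ℝ) else 0) ⊆
      Set.univ.pi (fun _ => Set.Icc 0 1) ∩ {x | ∑ t, x t = #{t | p t}} := by
  have hlin : IsLinearMap ℝ fun x : Fin (n + 1) → ℝ => ∑ t, x t :=
    ⟨fun x y => sum_add_distrib, fun c x => (mul_sum _ _ _).symm⟩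
  refine convexHull_min ?_
    ((convex_pi fun _ _ => convex_Icc 0 1).inter (convex_hyperplane hlin _))
  rintro _ ⟨σ, rfl⟩
  refine ⟨fun t _ => by dsimp only; split_ifs <;> simp, ?_⟩
  change ∑ t, (if p (σ t) then (1 : ℝ) else 0) = _
  rw [Equiv.sum_comp σ (fun t => if p t then (1 : ℝ) else 0), sum_boole]

lemma indicatorVec_mem_permA {s : Finset (Fin (n + 1))} (hs : #s = #{t | p t}) :
    indicatorVec s ∈ permA (fun t => if p t then (1 : ℝ) else 0) := by
  have hcard : Fintype.card {t // t ∈ s} = Fintype.card {t // p t} := by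
    rw [Fintype.card_coe, Fintype.card_subtype, hs]
  refine subset_convexHull ℝ _
    ⟨(Fintype.equivOfCardEq hcard).extendSubtype, funext fun t => ?_⟩
  by_cases ht : t ∈ s
  · simp [indicatorVec, ht, Equiv.extendSubtype_mem _ t ht]
  · simp [indicatorVec, ht, Equiv.extendSubtype_not_mem _ t ht]

theorem permA_ite_inter_intLattice :
    permA (fun t => if p t then (1 : ℝ) else 0) ∩ intLattice (n + 1) =
      indicatorVec '' {s | #s = #{t | p t}} := by
  ext x
  constructor
  · rintro ⟨hx, hlat⟩
    obtain ⟨hbd, hsum⟩ := permA_ite_subset p hx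
    have hx01 := eq_indicatorVec_of_mem_intLattice hlat hbd
    refine ⟨_, ?_, hx01.symm⟩
    rw [hx01, Set.mem_ofPred, sum_indicatorVec] at hsum
    exact_mod_cast hsum
  · rintro ⟨s, hs, rfl⟩
    exact ⟨indicatorVec_mem_permA p hs, indicatorVec_mem_intLattice s⟩

end Permutohedron

section Blocks

variable {n l : ℕ} (lam : Fin l → ℕ)

def blockStart (j : Fin l) : ℕ := ∑ j' ∈ univ.filter (fun j' => j' < j), lam j'

lemma quotPart_apply (b : Fin (n + 1) → ℝ) (j : Fin l) :
    quotPart l lam b j =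
      ∑ t ∈ univ.filter (fun t : Fin (n + 1) =>
        blockStart lam j ≤ t ∧ t < blockStart lam j + lam j), b t :=
  rfl

lemma sum_castLE_eq_blockStart (j : Fin l) :
    ∑ k : Fin j, lam (Fin.castLE j.2.le k) = blockStart lam j := by
  refine (sum_map univ (Fin.castLEEmb j.2.le) lam).symm.trans
    (congrArg (∑ j' ∈ ·, lam j') ?_)
  ext j'
  simp only [mem_map, mem_univ, true_and, mem_filter, Fin.castLEEmb_apply]
  exact ⟨fun ⟨k, hk⟩ => hk ▸ Fin.lt_def.2 k.2, fun h => ⟨⟨j', h⟩, rfl⟩⟩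

variable {lam} (hsum : ∑ j, lam j = n + 1)

-- `finSigmaFinEquiv` lays the blocks `Fin (lam j)` end to end.
noncomputable def blockIndex (t : Fin (n + 1)) : Fin l :=
  (finSigmaFinEquiv.symm (Fin.cast hsum.symm t)).1

lemma blockIndex_eq_iff (t : Fin (n + 1)) (j : Fin l) :
    blockIndex hsum t = j ↔ blockStart lam j ≤ t ∧ t < blockStart lam j + lam j := by
  have hval : ∀ q : (j : Fin l) × Fin (lam j),
      ((finSigmaFinEquiv q : Fin (∑ j, lam j)) : ℕ) = blockStart lam q.1 + q.2 := by
    intro q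
    rw [finSigmaFinEquiv_apply, sum_castLE_eq_blockStart]
  constructor
  · rintro rfl
    have h := hval (finSigmaFinEquiv.symm (Fin.cast hsum.symm t))
    rw [Equiv.apply_symm_apply, Fin.val_cast] at h
    have := (finSigmaFinEquiv.symm (Fin.cast hsum.symm t)).2.2
    exact ⟨by rw [blockIndex]; omega, by rw [blockIndex]; omega⟩
  · rintro ⟨hlo, hhi⟩
    have h : finSigmaFinEquiv ⟨j, ⟨t - blockStart lam j, by omega⟩⟩ = Fin.cast hsum.symm t :=
      Fin.ext (by rw [hval, Fin.val_cast]; dsimp only; omega)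
    rw [blockIndex, ← h, Equiv.symm_apply_apply]

lemma card_blockIndex_fiber (j : Fin l) : #{t | blockIndex hsum t = j} = lam j := by
  let e : Fin (n + 1) ≃ (j : Fin l) × Fin (lam j) :=
    (finCongr hsum.symm).trans finSigmaFinEquiv.symm
  rw [card_equiv e (t := {q | q.1 = j})
    (fun t => by simp only [mem_filter, mem_univ, true_and]; rfl)]
  rw [card_filter, Fintype.sum_sigma]
  simp [apply_ite card]

lemma quotPart_comp_indicatorVec :
    quotPart l lam ∘ indicatorVec = (Nat.cast ∘ ·) ∘ fiberCounts (blockIndex hsum) := by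
  funext s j
  rw [Function.comp_apply, quotPart_apply,
    filter_congr fun t _ => (blockIndex_eq_iff hsum t j).symm]
  simp only [indicatorVec, sum_boole, Function.comp_apply, fiberCounts]
  congr 2
  ext t
  simp [and_comm]

end Blocks

theorem typeA_minuscule_quot_count_general (n i : ℕ) (hi2 : i ≤ n + 1)
    (l : ℕ) (lam : Fin l → ℕ)
    (hsum : ∑ j, lam j = n + 1) :
    (quotPart l lam ''
        (permA (fun t : Fin (n + 1) => if (t : ℕ) < i then (1 : ℝ) else 0) ∩
          intLattice (n + 1))).ncard =
      {μ : Fin l → ℕ | (∀ j, μ j ≤ lam j) ∧ ∑ j, μ j = i}.ncard := by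
  have hones : #{t : Fin (n + 1) | (t : ℕ) < i} = i := by
    rw [Fin.card_filter_val_lt]
    omega
  rw [permA_ite_inter_intLattice, hones, ← Set.image_comp, quotPart_comp_indicatorVec hsum,
    Set.image_comp, image_fiberCounts,
    Set.ncard_image_of_injective _ Nat.cast_injective.comp_left]
  simp only [card_blockIndex_fiber hsum]

/-- for `a = (1,…,1,0,…,0)` with `i` ones and a partition
`λ ⊢ n+1`, the number of points of `quot_λ(Π(a) ∩ ℤ^{n+1})` equals the number of
compositions `(μ_1, …, μ_{ℓ(λ)})` of `i` fitting inside the Young diagram of `λ`. -/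
theorem typeA_minuscule_quot_count (n i : ℕ) (hi1 : 1 ≤ i) (hi2 : i ≤ n + 1)
    (l : ℕ) (lam : Fin l → ℕ) (hpos : ∀ j, 0 < lam j) (hanti : Antitone lam)
    (hsum : ∑ j, lam j = n + 1) :
    (quotPart l lam ''
        (permA (fun t : Fin (n + 1) => if (t : ℕ) < i then (1 : ℝ) else 0) ∩
          intLattice (n + 1))).ncard =
      {μ : Fin l → ℕ | (∀ j, μ j ≤ lam j) ∧ ∑ j, μ j = i}.ncard :=
  typeA_minuscule_quot_count_general n i hi2 l lam hsum
end

section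
/- Let a = (a_1,…,a_{n+1}) ∈ ℤ^{n+1} with a_1 ≥ a_2 ≥ ⋯ ≥ a_{n+1}, and let λ ⊢ n+1 be a partition of n+1. Then quot_λ(Π(a)) = {(x_1,…,x_{ℓ(λ)}) ∈ ℝ^{ℓ(λ)} : x_1+⋯+x_{ℓ(λ)} = a_1+⋯+a_{n+1}, and Σ_{i∈I} x_i ≤ a_1+⋯+a_{λ(I)} for every subset I ⊆ [ℓ(λ)]}, where λ(I) := Σ_{i∈I} λ_i. In particular, quot_λ(Π(a)) is a generalized permutohedron in ℝ^{ℓ(λ)}. -/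
/-!
Write `g k = a₁ + ⋯ + a_k`. Since `a` is decreasing, `g` is concave, so `f I = g (λ(I))` is a
submodular set function on `[ℓ(λ)]` and the right-hand side is its base polytope `B(f)`.
Every `quot_λ` of a permutation of `a` lies in `B(f)`, because any `k` entries of `a` sum to at
most `g k`. Conversely, the tight sets of a point of `B(f)` are closed under `∪` and `∩`; at an
extreme point they separate any two coordinates, so ordering the coordinates compatibly with
their minimal tight sets makes every initial segment tight. Along this chain
`x_s = g (N_s + λ_s) - g N_s` for disjoint windows `[N_s, N_s + λ_s)`, which is `quot_λ` of the
permutation of `a` carrying the windows onto the blocks.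

For an edge `[u, w]` of `B(f)`, `w - u` vanishes on the tight sets of the midpoint, so some
`t ≠ s` is never separated from a coordinate `s` with `(w - u)_s ≠ 0`; the midpoint can then
move both ways along `e_s - e_t` inside the face, forcing `w - u ∥ e_s - e_t`.
-/

open Finset

section PrefixSum

variable {m : ℕ}

def prefixSum (b : Fin m → ℝ) (k : ℕ) : ℝ := ∑ i : Fin m with i.1 < k, b i

lemma prefixSum_zero (b : Fin m → ℝ) : prefixSum b 0 = 0 := by
  simp [prefixSum]

lemma prefixSum_of_le (b : Fin m → ℝ) {k : ℕ} (hk : m ≤ k) : prefixSum b k = ∑ i, b i := by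
  rw [prefixSum, filter_true_of_mem fun i _ => i.2.trans_le hk]

lemma prefixSum_succ (b : Fin m → ℝ) {k : ℕ} (hk : k < m) :
    prefixSum b (k + 1) = prefixSum b k + b ⟨k, hk⟩ := by
  have : univ.filter (fun i : Fin m => i.1 < k + 1) =
      insert ⟨k, hk⟩ (univ.filter fun i : Fin m => i.1 < k) := by
    ext i
    simp only [Order.lt_add_one_iff, mem_filter, mem_univ, true_and, mem_insert, Fin.ext_iff]
    omega
  rw [prefixSum, this, sum_insert (by simp), add_comm]; rfl

lemma sum_Ico_eq_prefixSum_sub (b : Fin m → ℝ) (k r : ℕ) :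
    ∑ i : Fin m with k ≤ i.1 ∧ i.1 < k + r, b i = prefixSum b (k + r) - prefixSum b k := by
  rw [eq_sub_iff_add_eq, prefixSum, prefixSum, ← sum_union]
  · congr 1; ext i; simp only [mem_filter, mem_univ, true_and, mem_union]; omega
  · exact disjoint_filter.2 fun i _ h h' => by omega

lemma prefixSum_add_sub_le {b : Fin m → ℝ} (hb : Antitone b) {p q : ℕ} (hpq : p ≤ q) :
    ∀ {r : ℕ}, q + r ≤ m → prefixSum b (q + r) - prefixSum b q ≤ prefixSum b (p + r) - prefixSum b p
  | 0, _ => by simp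
  | r + 1, h => by
    rw [← add_assoc, ← add_assoc, prefixSum_succ b (by omega), prefixSum_succ b (by omega)]
    have := prefixSum_add_sub_le hb hpq (r := r) (by omega)
    have : b ⟨q + r, by omega⟩ ≤ b ⟨p + r, by omega⟩ := hb (Fin.mk_le_mk.2 (by omega))
    linarith

lemma sum_le_prefixSum_card {b : Fin m → ℝ} (hb : Antitone b) (V : Finset (Fin m)) :
    ∑ i ∈ V, b i ≤ prefixSum b #V := by
  obtain hV | hV := Nat.eq_zero_or_pos #V
  · simp [card_eq_zero.1 hV, prefixSum_zero]
  set P : Finset (Fin m) := {i : Fin m | i.1 < #V}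
  have hVm : #V ≤ m := by simpa using card_le_univ V
  -- `c` separates the values of `b` on `V \ P` (indices `≥ #V`) from those on `P \ V`
  set c := b ⟨#V - 1, by omega⟩
  calc ∑ i ∈ V, b i ≤ ∑ i ∈ V ∩ P, b i + #(V \ P) • c := by
        rw [← sum_inter_add_sum_sdiff V P]
        gcongr
        refine sum_le_card_nsmul _ _ _ fun i hi => hb (Fin.mk_le_mk.2 ?_)
        simp only [mem_sdiff, mem_filter, mem_univ, true_and, not_lt, P] at hi; omega
    _ = ∑ i ∈ P ∩ V, b i + #(P \ V) • c := by
        rw [inter_comm, card_sdiff_comm]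
        simp [P, Fin.card_filter_val_lt, hVm]
    _ ≤ prefixSum b #V := by
        rw [prefixSum, ← sum_inter_add_sum_sdiff P V]
        gcongr
        refine card_nsmul_le_sum _ _ _ fun i hi => hb (Fin.mk_le_mk.2 ?_)
        simp only [mem_sdiff, mem_filter, mem_univ, true_and, P] at hi; omega

end PrefixSum

lemma Equiv.Perm.exists_map_eq_of_existsUnique {α ι : Type*} [Fintype α]
    {B T : ι → Finset α} (hB : ∀ a, ∃! i, a ∈ B i) (hT : ∀ a, ∃! i, a ∈ T i)
    (hcard : ∀ i, #(B i) = #(T i)) :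
    ∃ σ : Equiv.Perm α, ∀ i, (B i).map σ.toEmbedding = T i := by
  classical
  choose p hp hp_unique using hB
  choose q hq hq_unique using hT
  have hpB : ∀ a i, p a = i ↔ a ∈ B i := fun a i => ⟨(· ▸ hp a), fun h => (hp_unique a i h).symm⟩
  have hqT : ∀ a i, q a = i ↔ a ∈ T i := fun a i => ⟨(· ▸ hq a), fun h => (hq_unique a i h).symm⟩
  have hfiber : ∀ i, Fintype.card {a // p a = i} = Fintype.card {a // q a = i} := fun i => by
    rw [Fintype.card_subtype, Fintype.card_subtype, filter_congr fun a _ => hpB a i,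
      filter_congr fun a _ => hqT a i, filter_mem_eq_inter, filter_mem_eq_inter, univ_inter,
      univ_inter, hcard]
  let e := fun i => Fintype.equivOfCardEq (hfiber i)
  refine ⟨Equiv.ofFiberEquiv e, fun i => ?_⟩
  ext a
  rw [mem_map_equiv, ← hpB, ← hqT, ← Equiv.ofFiberEquiv_map e, Equiv.apply_symm_apply]

section KeyBlock

variable {ι κ : Type*} [Fintype ι] [LinearOrder κ]

def keyOffset (k : ι → κ) (lam : ι → ℕ) (s : ι) : ℕ := ∑ t with k t < k s, lam t

def keyBlock (m : ℕ) (k : ι → κ) (lam : ι → ℕ) (s : ι) : Finset (Fin m) :=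
  {i : Fin m | keyOffset k lam s ≤ i.1 ∧ i.1 < keyOffset k lam s + lam s}

variable {k : ι → κ} {lam : ι → ℕ}

lemma keyOffset_add_le_keyOffset [DecidableEq ι] {s t : ι} (h : k s < k t) :
    keyOffset k lam s + lam s ≤ keyOffset k lam t := by
  rw [keyOffset, keyOffset, add_comm, ← sum_insert (by simp)]
  refine sum_le_sum_of_subset fun u hu => ?_
  simp only [mem_insert, mem_filter, mem_univ, true_and] at hu ⊢
  rcases hu with rfl | hu
  exacts [h, hu.trans h]

lemma keyOffset_add_le_sum [DecidableEq ι] (s : ι) : keyOffset k lam s + lam s ≤ ∑ t, lam t := by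
  rw [keyOffset, add_comm, ← sum_insert (by simp)]
  exact sum_le_sum_of_subset (subset_univ _)

lemma card_keyBlock {m : ℕ} (hm : ∑ t, lam t = m) (s : ι) : #(keyBlock m k lam s) = lam s := by
  classical
  have hs := keyOffset_add_le_sum (k := k) (lam := lam) s
  have : (keyBlock m k lam s).map Fin.valEmbedding =
      Ico (keyOffset k lam s) (keyOffset k lam s + lam s) := by
    ext t
    simp only [keyBlock, mem_map, mem_filter, mem_univ, true_and, Fin.valEmbedding_apply, mem_Ico]
    exact ⟨by rintro ⟨i, hi, rfl⟩; exact hi, fun ht => ⟨⟨t, by omega⟩, ht, rfl⟩⟩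
  simpa using congrArg card this

lemma disjoint_keyBlock [DecidableEq ι] {m : ℕ} (hk : Function.Injective k) {s t : ι} (h : s ≠ t) :
    Disjoint (keyBlock m k lam s) (keyBlock m k lam t) := by
  rw [disjoint_left]
  intro i hs ht
  simp only [keyBlock, mem_filter, mem_univ, true_and] at hs ht
  rcases lt_or_gt_of_ne (hk.ne h) with hlt | hlt
  · have := keyOffset_add_le_keyOffset (lam := lam) hlt; omega
  · have := keyOffset_add_le_keyOffset (lam := lam) hlt; omega

lemma biUnion_keyBlock_univ [DecidableEq ι] {m : ℕ} (hk : Function.Injective k)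
    (hm : ∑ t, lam t = m) : univ.biUnion (keyBlock m k lam) = univ := by
  refine eq_univ_of_card _ ?_
  rw [card_biUnion fun s _ t _ h => disjoint_keyBlock hk h]
  simp [card_keyBlock hm, hm]

lemma existsUnique_mem_keyBlock {m : ℕ} (hk : Function.Injective k) (hm : ∑ t, lam t = m)
    (i : Fin m) : ∃! s, i ∈ keyBlock m k lam s := by
  classical
  obtain ⟨s, -, hs⟩ := mem_biUnion.1 (biUnion_keyBlock_univ hk hm ▸ mem_univ i)
  exact ⟨s, hs, fun t ht => by_contra fun h => disjoint_left.1 (disjoint_keyBlock hk h) ht hs⟩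

end KeyBlock

section Convex

variable {E : Type*} [AddCommGroup E] [Module ℝ E]

lemma eq_zero_of_mem_extremePoints_of_add_mem_of_sub_mem {A : Set E} {x v : E}
    (hx : x ∈ A.extremePoints ℝ) (hadd : x + v ∈ A) (hsub : x - v ∈ A) : v = 0 := by
  have hmid : x ∈ openSegment ℝ (x + v) (x - v) :=
    ⟨1 / 2, 1 / 2, by norm_num, by norm_num, by norm_num, by module⟩
  simpa using hx.2 hadd hsub hmid

lemma exists_sub_eq_smul_of_add_mem_segment_of_sub_mem_segment {u w m v : E} (hv : v ≠ 0)
    (hadd : m + v ∈ segment ℝ u w) (hsub : m - v ∈ segment ℝ u w) :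
    ∃ c : ℝ, w - u = c • v := by
  rw [segment_eq_image'] at hadd hsub
  obtain ⟨β₁, -, h₁⟩ := hadd
  obtain ⟨β₂, -, h₂⟩ := hsub
  have h : (β₁ - β₂) • (w - u) = (2 : ℝ) • v := by
    simp only at h₁ h₂
    rw [sub_smul, ← add_sub_add_left_eq_sub _ _ u, h₁, h₂]; module
  have hβ : β₁ - β₂ ≠ 0 := by
    rintro hβ
    rw [hβ, zero_smul, eq_comm, smul_eq_zero] at h
    exact hv (h.resolve_left two_ne_zero)
  exact ⟨(β₁ - β₂)⁻¹ * 2, by rw [mul_smul, ← h, smul_smul, inv_mul_cancel₀ hβ, one_smul]⟩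

end Convex

lemma subset_convexHull_of_extremePoints_subset {E : Type*} [AddCommGroup E] [Module ℝ E]
    [TopologicalSpace E] [T2Space E] [IsTopologicalAddGroup E] [ContinuousSMul ℝ E]
    [LocallyConvexSpace ℝ E] {A V : Set E} (hA : IsCompact A) (hAc : Convex ℝ A) (hV : V.Finite)
    (h : A.extremePoints ℝ ⊆ V) : A ⊆ convexHull ℝ V :=
  calc A = closure (convexHull ℝ (A.extremePoints ℝ)) :=
        (closure_convexHull_extremePoints hA hAc).symm
    _ ⊆ closure (convexHull ℝ V) := closure_mono (convexHull_mono h)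
    _ = convexHull ℝ V := (hV.isClosed_convexHull ℝ).closure_eq

section Single

variable {ι : Type*} [DecidableEq ι] {s t : ι}

lemma single_sub_single_ne_zero (hst : s ≠ t) : (Pi.single s 1 - Pi.single t 1 : ι → ℝ) ≠ 0 :=
  fun h => by simpa [hst] using congrFun h s

lemma sum_single_sub_single_eq_zero {T : Finset ι} (h : s ∈ T ↔ t ∈ T) :
    ∑ j ∈ T, (Pi.single s 1 - Pi.single t 1 : ι → ℝ) j = 0 := by
  simp [sum_sub_distrib, sum_pi_single', h]

end Single

section BasePolytope

open Filter Topology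

variable {ι : Type*} [Fintype ι]

def basePolytope (f : Finset ι → ℝ) : Set (ι → ℝ) :=
  {x | ∑ j, x j = f univ ∧ ∀ I, ∑ j ∈ I, x j ≤ f I}

def IsTight (f : Finset ι → ℝ) (x : ι → ℝ) (T : Finset ι) : Prop := ∑ j ∈ T, x j = f T

variable {f : Finset ι → ℝ} {x : ι → ℝ}

lemma convex_basePolytope : Convex ℝ (basePolytope f) := by
  have hsum : ∀ (y z : ι → ℝ) (a b : ℝ) (I : Finset ι),
      ∑ j ∈ I, (a • y + b • z) j = a * ∑ j ∈ I, y j + b * ∑ j ∈ I, z j := by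
    simp [sum_add_distrib, mul_sum]
  rintro y ⟨hy, hyI⟩ z ⟨hz, hzI⟩ a b ha hb hab
  refine ⟨?_, fun I => ?_⟩
  · rw [hsum, hy, hz, ← add_mul, hab, one_mul]
  · calc ∑ j ∈ I, (a • y + b • z) j = a * ∑ j ∈ I, y j + b * ∑ j ∈ I, z j := hsum ..
      _ ≤ a * f I + b * f I := by gcongr <;> simp [hyI, hzI]
      _ = f I := by rw [← add_mul, hab, one_mul]

lemma isClosed_basePolytope : IsClosed (basePolytope f) := by
  have : basePolytope f = {x | ∑ j, x j = f univ} ∩ ⋂ I, {x | ∑ j ∈ I, x j ≤ f I} := by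
    ext; simp [basePolytope]
  rw [this]
  exact (isClosed_eq (by fun_prop) continuous_const).inter
    (isClosed_iInter fun I => isClosed_le (by fun_prop) continuous_const)

lemma basePolytope_subset_Icc [DecidableEq ι] :
    basePolytope f ⊆ Set.Icc (fun j => f univ - f (univ.erase j)) (fun j => f {j}) := by
  rintro x ⟨hx, hxI⟩
  refine ⟨fun j => ?_, fun j => by simpa using hxI {j}⟩
  have := hxI (univ.erase j)
  rw [← hx, ← add_sum_erase _ _ (mem_univ j)]
  simp only
  linarith

lemma isCompact_basePolytope : IsCompact (basePolytope f) := by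
  classical
  exact isCompact_Icc.of_isClosed_subset isClosed_basePolytope basePolytope_subset_Icc

lemma eventually_add_smul_mem_basePolytope {d : ι → ℝ} (hx : x ∈ basePolytope f)
    (hd : ∀ T, IsTight f x T → ∑ j ∈ T, d j = 0) :
    ∀ᶠ ε in 𝓝 (0 : ℝ), x + ε • d ∈ basePolytope f := by
  have hsum : ∀ (ε : ℝ) T, ∑ j ∈ T, (x + ε • d) j = ∑ j ∈ T, x j + ε * ∑ j ∈ T, d j := by
    simp [sum_add_distrib, mul_sum]
  have hle : ∀ T, ∀ᶠ ε in 𝓝 (0 : ℝ), ∑ j ∈ T, (x + ε • d) j ≤ f T := by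
    intro T
    simp only [hsum]
    by_cases hT : IsTight f x T
    · exact Eventually.of_forall fun ε => by rw [hd T hT, mul_zero, add_zero, hT]
    · have hcont : Continuous fun ε : ℝ => ∑ j ∈ T, x j + ε * ∑ j ∈ T, d j := by fun_prop
      refine (hcont.tendsto 0 |>.eventually (gt_mem_nhds ?_)).mono fun ε => le_of_lt
      simpa using lt_of_le_of_ne (hx.2 T) hT
  filter_upwards [eventually_all.2 hle] with ε hε
  exact ⟨by rw [hsum, hd univ hx.1, mul_zero, add_zero, hx.1], hε⟩

lemma exists_pos_add_smul_mem_basePolytope {d : ι → ℝ} (hx : x ∈ basePolytope f)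
    (hd : ∀ T, IsTight f x T → ∑ j ∈ T, d j = 0) :
    ∃ δ : ℝ, 0 < δ ∧ x + δ • d ∈ basePolytope f ∧ x - δ • d ∈ basePolytope f := by
  obtain ⟨δ, hδ, hball⟩ := Metric.eventually_nhds_iff.1 (eventually_add_smul_mem_basePolytope hx hd)
  have hhalf : |δ| / 2 < δ := by rw [abs_of_pos hδ]; exact half_lt_self hδ
  refine ⟨δ / 2, half_pos hδ, hball (by simpa using hhalf), ?_⟩
  simpa [sub_eq_add_neg] using hball (y := -(δ / 2)) (by simpa using hhalf)

variable [DecidableEq ι]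

lemma exists_isTight_not_iff_of_mem_extremePoints (hx : x ∈ (basePolytope f).extremePoints ℝ)
    {s t : ι} (hst : s ≠ t) : ∃ T, IsTight f x T ∧ ¬(s ∈ T ↔ t ∈ T) := by
  by_contra! hsep
  obtain ⟨δ, hδ, hadd, hsub⟩ := exists_pos_add_smul_mem_basePolytope hx.1
    fun T hT => sum_single_sub_single_eq_zero (hsep T hT)
  have := eq_zero_of_mem_extremePoints_of_add_mem_of_sub_mem hx hadd hsub
  exact single_sub_single_ne_zero hst ((smul_eq_zero.1 this).resolve_left hδ.ne')

def IsSubmodular (f : Finset ι → ℝ) : Prop := ∀ S T, f (S ∪ T) + f (S ∩ T) ≤ f S + f T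

lemma IsTight.union (hf : IsSubmodular f) (hx : x ∈ basePolytope f) {S T : Finset ι}
    (hS : IsTight f x S) (hT : IsTight f x T) : IsTight f x (S ∪ T) := by
  have := sum_union_inter (s₁ := S) (s₂ := T) (f := x)
  have := hf S T; have := hx.2 (S ∪ T); have := hx.2 (S ∩ T)
  unfold IsTight at *
  linarith

lemma IsTight.inter (hf : IsSubmodular f) (hx : x ∈ basePolytope f) {S T : Finset ι}
    (hS : IsTight f x S) (hT : IsTight f x T) : IsTight f x (S ∩ T) := by
  have := sum_union_inter (s₁ := S) (s₂ := T) (f := x)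
  have := hf S T; have := hx.2 (S ∪ T); have := hx.2 (S ∩ T)
  unfold IsTight at *
  linarith

lemma isTight_sup (hf : IsSubmodular f) (hf₀ : f ∅ = 0) (hx : x ∈ basePolytope f)
    {κ : Type*} {s : Finset κ} {F : κ → Finset ι} (hF : ∀ i ∈ s, IsTight f x (F i)) :
    IsTight f x (s.sup F) :=
  sup_induction (p := IsTight f x) (by simp [IsTight, hf₀]) (fun _ h₁ _ h₂ => h₁.union hf hx h₂) hF

lemma isTight_inf (hf : IsSubmodular f) (hx : x ∈ basePolytope f)
    {κ : Type*} {s : Finset κ} {F : κ → Finset ι} (hF : ∀ i ∈ s, IsTight f x (F i)) :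
    IsTight f x (s.inf F) :=
  inf_induction (p := IsTight f x) hx.1 (fun _ h₁ _ h₂ => h₁.inter hf hx h₂) hF

noncomputable instance (f : Finset ι → ℝ) (x : ι → ℝ) : DecidablePred (IsTight f x) :=
  fun _ => inferInstanceAs (Decidable (_ = _))

noncomputable def minTight (f : Finset ι → ℝ) (x : ι → ℝ) (s : ι) : Finset ι :=
  (univ.filter fun T => IsTight f x T ∧ s ∈ T).inf id

lemma isTight_minTight (hf : IsSubmodular f) (hx : x ∈ basePolytope f) (s : ι) :
    IsTight f x (minTight f x s) :=
  isTight_inf hf hx fun _ hT => (mem_filter.1 hT).2.1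

lemma mem_minTight (s : ι) : s ∈ minTight f x s := by
  simp [minTight, mem_inf]

lemma minTight_subset {s : ι} {T : Finset ι} (hT : IsTight f x T) (hs : s ∈ T) :
    minTight f x s ⊆ T :=
  inf_le (f := id) (mem_filter.2 ⟨mem_univ T, hT, hs⟩)

lemma isTight_of_forall_minTight_subset (hf : IsSubmodular f) (hf₀ : f ∅ = 0)
    (hx : x ∈ basePolytope f) {S : Finset ι} (hS : ∀ t ∈ S, minTight f x t ⊆ S) :
    IsTight f x S := by
  have : S.sup (minTight f x) = S :=
    le_antisymm (Finset.sup_le hS) fun t ht => mem_sup.2 ⟨t, ht, mem_minTight t⟩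
  exact this ▸ isTight_sup hf hf₀ hx fun t _ => isTight_minTight hf hx t

lemma minTight_ssubset_of_mem_extremePoints (hf : IsSubmodular f)
    (hx : x ∈ (basePolytope f).extremePoints ℝ) {s t : ι} (ht : t ∈ minTight f x s) (hts : t ≠ s) :
    minTight f x t ⊂ minTight f x s := by
  refine ssubset_of_subset_of_ne (minTight_subset (isTight_minTight hf hx.1 s) ht) fun heq => ?_
  obtain ⟨T, hT, hsep⟩ := exists_isTight_not_iff_of_mem_extremePoints hx hts
  exact hsep ⟨fun htT => minTight_subset hT htT (heq ▸ mem_minTight s),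
    fun hsT => minTight_subset hT hsT (heq ▸ ht)⟩

lemma exists_injective_key_of_mem_extremePoints [LinearOrder ι] (hf : IsSubmodular f)
    (hf₀ : f ∅ = 0) (hx : x ∈ (basePolytope f).extremePoints ℝ) :
    ∃ k : ι → ℕ ×ₗ ι, Function.Injective k ∧
      ∀ s, x s = f (insert s (univ.filter fun t => k t < k s)) -
        f (univ.filter fun t => k t < k s) := by
  -- any injective order refining inclusion of minimal tight sets makes initial segments tight
  set k : ι → ℕ ×ₗ ι := fun s => toLex (#(minTight f x s), s)
  have hk : Function.Injective k := fun s t h => (Prod.ext_iff.1 (toLex.injective h)).2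
  have hk_le : ∀ {s t}, t ∈ minTight f x s → k t ≤ k s := by
    intro s t ht
    rcases eq_or_ne t s with rfl | hts
    · exact le_rfl
    · exact (Prod.Lex.toLex_lt_toLex.2 (Or.inl
        (card_lt_card (minTight_ssubset_of_mem_extremePoints hf hx ht hts)))).le
  refine ⟨k, hk, fun s => ?_⟩
  have hD : IsTight f x (univ.filter fun t => k t < k s) :=
    isTight_of_forall_minTight_subset hf hf₀ hx.1 fun t ht u hu => by
      simp only [mem_filter, mem_univ, true_and] at ht ⊢
      exact (hk_le hu).trans_lt ht
  have hsD : IsTight f x (insert s (univ.filter fun t => k t < k s)) :=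
    isTight_of_forall_minTight_subset hf hf₀ hx.1 fun t ht u hu => by
      simp only [mem_insert, mem_filter, mem_univ, true_and] at ht ⊢
      rcases ht with rfl | ht
      · exact (hk_le hu).eq_or_lt.imp_left (hk ·)
      · exact Or.inr ((hk_le hu).trans_lt ht)
  rw [IsTight, sum_insert (by simp)] at hsD
  rw [← hsD, ← hD, add_sub_cancel_right]

lemma exists_ne_forall_isTight_iff (hf : IsSubmodular f) (hf₀ : f ∅ = 0)
    (hx : x ∈ basePolytope f) {d : ι → ℝ} (hd : ∀ T, IsTight f x T → ∑ j ∈ T, d j = 0)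
    {s : ι} (hs : d s ≠ 0) : ∃ t ≠ s, ∀ T, IsTight f x T → (s ∈ T ↔ t ∈ T) := by
  set T₁ := minTight f x s
  set T₂ := (univ.filter fun T => IsTight f x T ∧ s ∉ T).sup id
  have hT₁ : IsTight f x T₁ := isTight_minTight hf hx s
  have hT₂ : IsTight f x T₂ := isTight_sup hf hf₀ hx fun _ hT => (mem_filter.1 hT).2.1
  have hsT₂ : s ∉ T₂ := by simp +contextual [T₂]
  have hs₁₂ : s ∈ T₁ \ T₂ := mem_sdiff.2 ⟨mem_minTight s, hsT₂⟩
  have hsum : ∑ j ∈ T₁ \ T₂, d j = 0 := by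
    rw [← sdiff_inter_self_left, sum_sdiff_eq_sub inter_subset_left, hd _ hT₁,
      hd _ (hT₁.inter hf hx hT₂), sub_zero]
  -- `s` cannot be the only point of `T₁ \ T₂`, since `d` sums to zero there but `d s ≠ 0`
  obtain ⟨t, ht, hts⟩ : ∃ t ∈ T₁ \ T₂, t ≠ s := by
    by_contra! h
    exact hs (sum_eq_single_of_mem (f := d) s hs₁₂ (fun t ht hts => absurd (h t ht) hts) ▸ hsum)
  refine ⟨t, hts, fun T hT => ⟨fun hsT => minTight_subset hT hsT (mem_sdiff.1 ht).1, fun htT => ?_⟩⟩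
  by_contra hsT
  exact (mem_sdiff.1 ht).2 (le_sup (f := id) (mem_filter.2 ⟨mem_univ T, hT, hsT⟩) htT)

lemma exists_sub_eq_smul_single_sub_single_of_face_eq_segment (hf : IsSubmodular f)
    (hf₀ : f ∅ = 0) (φ : (ι → ℝ) →ₗ[ℝ] ℝ) {u w : ι → ℝ} (hne : u ≠ w)
    (hface : {x | x ∈ basePolytope f ∧ ∀ y ∈ basePolytope f, φ y ≤ φ x} = segment ℝ u w) :
    ∃ (s t : ι) (c : ℝ), w - u = c • (Pi.single s 1 - Pi.single t 1) := by
  have hmem_face : ∀ {y}, y ∈ segment ℝ u w →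
      y ∈ basePolytope f ∧ ∀ z ∈ basePolytope f, φ z ≤ φ y := fun hy => by rwa [← hface] at hy
  set m := midpoint ℝ u w
  obtain ⟨hm, hm_max⟩ := hmem_face (midpoint_mem_segment u w)
  have hu := (hmem_face (left_mem_segment ℝ u w)).1
  have hw := (hmem_face (right_mem_segment ℝ u w)).1
  -- a tight set of the midpoint is tight at both ends
  have hd : ∀ T, IsTight f m T → ∑ j ∈ T, (w - u) j = 0 := by
    intro T hT
    have hmT : ∑ j ∈ T, m j = (∑ j ∈ T, u j + ∑ j ∈ T, w j) / 2 := by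
      simp only [m, midpoint_eq_smul_add, invOf_eq_inv, Pi.smul_apply, Pi.add_apply, smul_eq_mul,
        ← mul_sum, sum_add_distrib]
      ring
    have := hu.2 T; have := hw.2 T
    rw [IsTight, hmT] at hT
    simp only [Pi.sub_apply, sum_sub_distrib]
    linarith
  obtain ⟨s, hs⟩ := Function.ne_iff.1 (sub_ne_zero.2 hne.symm)
  obtain ⟨t, hts, hst⟩ := exists_ne_forall_isTight_iff hf hf₀ hm hd hs
  set v : ι → ℝ := Pi.single s 1 - Pi.single t 1
  obtain ⟨δ, hδ, hadd, hsub⟩ :=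
    exists_pos_add_smul_mem_basePolytope hm fun T hT => sum_single_sub_single_eq_zero (hst T hT)
  have hφ : φ (δ • v) = 0 := by
    have h₁ := hm_max _ hadd
    have h₂ := hm_max _ hsub
    rw [map_add] at h₁
    rw [map_sub] at h₂
    linarith
  have hseg : ∀ y ∈ basePolytope f, φ y = φ m → y ∈ segment ℝ u w := fun y hy hφy =>
    hface ▸ ⟨hy, fun z hz => hφy ▸ hm_max z hz⟩
  obtain ⟨c, hc⟩ := exists_sub_eq_smul_of_add_mem_segment_of_sub_mem_segment
    (smul_ne_zero hδ.ne' (single_sub_single_ne_zero hts.symm))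
    (hseg _ hadd (by rw [map_add, hφ, add_zero])) (hseg _ hsub (by rw [map_sub, hφ, sub_zero]))
  exact ⟨s, t, c * δ, by rw [hc, mul_smul]⟩

end BasePolytope

section PartitionPrefixSum

variable {ι : Type*} {m : ℕ}

def partPrefixSum (b : Fin m → ℝ) (lam : ι → ℕ) (I : Finset ι) : ℝ := prefixSum b (∑ j ∈ I, lam j)

variable {b : Fin m → ℝ} {lam : ι → ℕ}

lemma partPrefixSum_empty : partPrefixSum b lam ∅ = 0 := by
  simp [partPrefixSum, prefixSum_zero]

lemma isSubmodular_partPrefixSum [Fintype ι] [DecidableEq ι] (hb : Antitone b)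
    (hm : ∑ j, lam j = m) : IsSubmodular (partPrefixSum b lam) := by
  intro S T
  have hS : ∑ j ∈ S, lam j = ∑ j ∈ S ∩ T, lam j + ∑ j ∈ S \ T, lam j :=
    (sum_inter_add_sum_sdiff S T lam).symm
  have hST : ∑ j ∈ S ∪ T, lam j = ∑ j ∈ T, lam j + ∑ j ∈ S \ T, lam j := by
    rw [union_comm, ← union_sdiff_self_eq_union, sum_union disjoint_sdiff]
  have hle : ∑ j ∈ S ∪ T, lam j ≤ m := hm ▸ sum_le_sum_of_subset (subset_univ _)
  have := prefixSum_add_sub_le hb (sum_le_sum_of_subset (f := lam) (inter_subset_right (s₁ := S)))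
    (hST ▸ hle)
  simp only [partPrefixSum, hS, hST]
  linarith

lemma basePolytope_partPrefixSum [Fintype ι] (hm : ∑ j, lam j = m) :
    basePolytope (partPrefixSum b lam) =
      {x | ∑ j, x j = ∑ i, b i ∧ ∀ I, ∑ j ∈ I, x j ≤ prefixSum b (∑ j ∈ I, lam j)} := by
  simp only [basePolytope, partPrefixSum, hm, prefixSum_of_le b le_rfl]

end PartitionPrefixSum

section Quotient

variable {n l : ℕ} {lam : Fin l → ℕ}

lemma quotPart_apply_eq_sum_keyBlock (b : Fin (n + 1) → ℝ) (j : Fin l) :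
    quotPart l lam b j = ∑ i ∈ keyBlock (n + 1) id lam j, b i := rfl

noncomputable def quotPartLinear (n l : ℕ) (lam : Fin l → ℕ) :
    (Fin (n + 1) → ℝ) →ₗ[ℝ] (Fin l → ℝ) where
  toFun := quotPart l lam
  map_add' _ _ := funext fun _ => sum_add_distrib
  map_smul' _ _ := funext fun _ => (mul_sum ..).symm

lemma sum_quotPart (c : Fin (n + 1) → ℝ) (I : Finset (Fin l)) :
    ∑ j ∈ I, quotPart l lam c j = ∑ i ∈ I.biUnion (keyBlock (n + 1) id lam), c i := by
  rw [sum_biUnion fun s _ t _ h => disjoint_keyBlock Function.injective_id h]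
  exact sum_congr rfl fun j _ => quotPart_apply_eq_sum_keyBlock c j

lemma quotPart_comp_perm_mem_basePolytope {b : Fin (n + 1) → ℝ} (hb : Antitone b)
    (hm : ∑ j, lam j = n + 1) (σ : Equiv.Perm (Fin (n + 1))) :
    quotPart l lam (fun i => b (σ i)) ∈ basePolytope (partPrefixSum b lam) := by
  rw [basePolytope_partPrefixSum hm]
  refine ⟨?_, fun I => ?_⟩
  · rw [sum_quotPart, biUnion_keyBlock_univ Function.injective_id hm, Equiv.sum_comp σ b]
  · set S := I.biUnion (keyBlock (n + 1) id lam)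
    have hcard : #(S.map σ.toEmbedding) = ∑ j ∈ I, lam j := by
      rw [card_map, card_biUnion fun s _ t _ h => disjoint_keyBlock Function.injective_id h]
      exact sum_congr rfl fun j _ => card_keyBlock hm j
    calc ∑ j ∈ I, quotPart l lam (fun i => b (σ i)) j = ∑ u ∈ S.map σ.toEmbedding, b u :=
          (sum_quotPart _ I).trans (sum_map S σ.toEmbedding b).symm
      _ ≤ prefixSum b (∑ j ∈ I, lam j) := hcard ▸ sum_le_prefixSum_card hb _

lemma exists_perm_quotPart_eq_of_mem_extremePoints {b : Fin (n + 1) → ℝ} (hb : Antitone b)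
    (hm : ∑ j, lam j = n + 1) {x : Fin l → ℝ}
    (hx : x ∈ (basePolytope (partPrefixSum b lam)).extremePoints ℝ) :
    ∃ σ : Equiv.Perm (Fin (n + 1)), quotPart l lam (fun i => b (σ i)) = x := by
  obtain ⟨k, hk, hxk⟩ := exists_injective_key_of_mem_extremePoints
    (isSubmodular_partPrefixSum hb hm) partPrefixSum_empty hx
  have hx_block : ∀ s, x s = ∑ i ∈ keyBlock (n + 1) k lam s, b i := fun s => by
    rw [hxk, partPrefixSum, partPrefixSum, sum_insert (by simp), add_comm (lam s)]
    exact (sum_Ico_eq_prefixSum_sub b _ _).symm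
  obtain ⟨σ, hσ⟩ := Equiv.Perm.exists_map_eq_of_existsUnique
    (existsUnique_mem_keyBlock Function.injective_id hm) (existsUnique_mem_keyBlock hk hm)
    fun s => by rw [card_keyBlock hm, card_keyBlock hm]
  refine ⟨σ, funext fun s => ?_⟩
  rw [quotPart_apply_eq_sum_keyBlock, hx_block, ← hσ, sum_map]
  rfl

lemma quotPart_image_permA {b : Fin (n + 1) → ℝ} (hb : Antitone b) (hm : ∑ j, lam j = n + 1) :
    quotPart l lam '' permA b = basePolytope (partPrefixSum b lam) := by
  set V := {y : Fin (n + 1) → ℝ | ∃ σ : Equiv.Perm (Fin (n + 1)), y = fun i => b (σ i)}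
  have hV : V = Set.range fun σ : Equiv.Perm (Fin (n + 1)) => fun i => b (σ i) := by
    ext y; simp [V, eq_comm]
  have himage : quotPart l lam '' convexHull ℝ V = convexHull ℝ (quotPart l lam '' V) :=
    LinearMap.image_convexHull (quotPartLinear n l lam) V
  rw [permA, himage]
  refine (convexHull_min ?_ convex_basePolytope).antisymm
    (subset_convexHull_of_extremePoints_subset isCompact_basePolytope convex_basePolytope
      ((hV ▸ Set.finite_range _).image _) fun x hx => ?_)
  · rintro _ ⟨_, ⟨σ, rfl⟩, rfl⟩
    exact quotPart_comp_perm_mem_basePolytope hb hm σ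
  · obtain ⟨σ, hσ⟩ := exists_perm_quotPart_eq_of_mem_extremePoints hb hm hx
    exact ⟨_, ⟨σ, rfl⟩, hσ⟩

end Quotient

theorem typeA_quot_facet_description_general (n : ℕ) (a : Fin (n + 1) → ℤ)
    (ha : ∀ s t : Fin (n + 1), s ≤ t → a t ≤ a s)
    (l : ℕ) (lam : Fin l → ℕ) (hsum : ∑ j, lam j = n + 1) :
    quotPart l lam '' permA (fun t => (a t : ℝ)) =
        {x : Fin l → ℝ | (∑ j, x j) = (∑ t, (a t : ℝ)) ∧
          ∀ I : Finset (Fin l), ∑ j ∈ I, x j ≤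
            ∑ t ∈ Finset.univ.filter (fun t : Fin (n + 1) => t.1 < ∑ j ∈ I, lam j),
              (a t : ℝ)} ∧
      ∀ (φ : (Fin l → ℝ) →ₗ[ℝ] ℝ) (u w : Fin l → ℝ),
        u ∈ quotPart l lam '' permA (fun t => (a t : ℝ)) →
        w ∈ quotPart l lam '' permA (fun t => (a t : ℝ)) → u ≠ w →
        {x | x ∈ quotPart l lam '' permA (fun t => (a t : ℝ)) ∧
            ∀ y ∈ quotPart l lam '' permA (fun t => (a t : ℝ)), φ y ≤ φ x} =
          segment ℝ u w →
        ∃ (s t : Fin l) (c : ℝ), w - u = c • (Pi.single s (1 : ℝ) - Pi.single t 1) := by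
  have hb : Antitone fun t => (a t : ℝ) := fun s t hst => Int.cast_le.2 (ha s t hst)
  have himg := quotPart_image_permA hb hsum
  refine ⟨himg.trans (basePolytope_partPrefixSum hsum), fun φ u w _ _ hne hface => ?_⟩
  rw [himg] at hface
  exact exists_sub_eq_smul_single_sub_single_of_face_eq_segment
    (isSubmodular_partPrefixSum hb hsum) partPrefixSum_empty φ hne hface

/-- the facet description of the quotient `quot_λ(Π(a))`:
it equals the set of `x ∈ ℝ^{ℓ(λ)}` with `Σ x_j = Σ a_t` and
`Σ_{j∈I} x_j ≤ a_1 + ⋯ + a_{λ(I)}` for all `I ⊆ [ℓ(λ)]`, where `λ(I) = Σ_{j∈I} λ_j`.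
In particular `quot_λ(Π(a))` is a generalized permutohedron: every edge of it has
direction `e_s − e_t`. -/
theorem typeA_quot_facet_description (n : ℕ) (a : Fin (n + 1) → ℤ)
    (ha : ∀ s t : Fin (n + 1), s ≤ t → a t ≤ a s)
    (l : ℕ) (lam : Fin l → ℕ) (hpos : ∀ j, 0 < lam j) (hanti : Antitone lam)
    (hsum : ∑ j, lam j = n + 1) :
    quotPart l lam '' permA (fun t => (a t : ℝ)) =
        {x : Fin l → ℝ | (∑ j, x j) = (∑ t, (a t : ℝ)) ∧
          ∀ I : Finset (Fin l), ∑ j ∈ I, x j ≤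
            ∑ t ∈ Finset.univ.filter (fun t : Fin (n + 1) => t.1 < ∑ j ∈ I, lam j),
              (a t : ℝ)} ∧
      ∀ (φ : (Fin l → ℝ) →ₗ[ℝ] ℝ) (u w : Fin l → ℝ),
        u ∈ quotPart l lam '' permA (fun t => (a t : ℝ)) →
        w ∈ quotPart l lam '' permA (fun t => (a t : ℝ)) → u ≠ w →
        {x | x ∈ quotPart l lam '' permA (fun t => (a t : ℝ)) ∧
            ∀ y ∈ quotPart l lam '' permA (fun t => (a t : ℝ)), φ y ≤ φ x} =
          segment ℝ u w →
        ∃ (s t : Fin l) (c : ℝ), w - u = c • (Pi.single s (1 : ℝ) - Pi.single t 1) :=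
  typeA_quot_facet_description_general n a ha l lam hsum
end
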